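/- arXiv:2603.09629 — 3 statements merged into one kernel-verified Lean document; each statement's English description precedes it below -/
import Mathlib

section
/- Let Z_1, Z_2, ... be i.i.d. real random variables with mean zero, variance 1, and E|Z_1|^{2+λ} < ∞ for some λ ≥ 0, and let S_n = Z_1 + ... + Z_n. Suppose c is a constant such that E|S_n|^{2+λ} ≤ c · n^{1+λ/2} · E|N(0,1)|^{2+λ} for all n ≥ 1. Then for all integers m ≥ 1 and all a > 0, Pr{ √m · sup_{n ≥ m} |S_n / n| ≥ a } ≤ 6.75 · c · E|N(0,1)|^{2+λ} / a^{2+λ}. -/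
open MeasureTheory ProbabilityTheory Filter Set Topology

noncomputable section

/-- A standard Brownian motion on `[0, ∞)`: starts at `0`, a.s. continuous paths,
independent increments, and `W t - W s ~ N(0, t - s)` for `0 ≤ s ≤ t`. -/
structure IsStdBM {Ω : Type*} [MeasurableSpace Ω] (P : Measure Ω) (W : ℝ → Ω → ℝ) : Prop where
  meas : ∀ t : ℝ, Measurable (W t)
  init : ∀ᵐ ω ∂P, W 0 ω = 0
  cont : ∀ᵐ ω ∂P, Continuous fun t : ℝ => W t ω
  indep : ∀ (n : ℕ) (t : Fin (n + 1) → ℝ), Monotone t → (∀ i, 0 ≤ t i) →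
    iIndepFun
      (fun i : Fin n => fun ω => W (t i.succ) ω - W (t i.castSucc) ω) P
  gauss : ∀ s t : ℝ, 0 ≤ s → s ≤ t →
    P.map (fun ω => W t ω - W s ω) = gaussianReal 0 (Real.toNNReal (t - s))

/-- Convergence in distribution (weak convergence of the laws on `ℝ`) of real random
variables, possibly defined on different probability spaces. -/
def TendstoInDistribution {ι : Type*} {Ω : Type*} {Ω' : Type*}
    [MeasurableSpace Ω] [MeasurableSpace Ω']
    (P : Measure Ω) (X : ι → Ω → ℝ) (l : Filter ι)
    (P' : Measure Ω') (Y : Ω' → ℝ) : Prop :=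
  ∀ f : BoundedContinuousFunction ℝ ℝ,
    Tendsto (fun i => ∫ ω, f (X i ω) ∂P) l (𝓝 (∫ ω', f (Y ω') ∂P'))

/-- An i.i.d. sequence of random variables. -/
def IsIIDSeq {Ω E : Type*} [MeasurableSpace Ω] [MeasurableSpace E]
    (P : Measure Ω) (Z : ℕ → Ω → E) : Prop :=
  (∀ i, Measurable (Z i)) ∧
    iIndepFun Z P ∧
    ∀ i, P.map (Z i) = P.map (Z 0)



lemma aux_abs_submartingale {Ω : Type*} {m0 : MeasurableSpace Ω} {P : Measure Ω}
    {ℱ : Filtration ℕ m0} {g : ℕ → Ω → ℝ} (hg : Martingale g ℱ P) :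
    Submartingale (fun n ω => |g n ω|) ℱ P := by
  have h := hg.submartingale.sup hg.neg.submartingale
  have : (fun n ω => |g n ω|) = g ⊔ (-g) := by
    funext n ω
    simp only [Pi.sup_apply, Pi.neg_apply, abs_eq_max_neg]
  rw [this]
  exact h

lemma aux_doob {Ω : Type*} {m0 : MeasurableSpace Ω} {P : Measure Ω} [IsProbabilityMeasure P]
    {ℱ : Filtration ℕ m0} {g : ℕ → Ω → ℝ} (hg : Martingale g ℱ P)
    {p q : ℝ} (hpq : p.HolderConjugate q)
    (N : ℕ) (hgp : Integrable (fun ω => |g N ω| ^ p) P)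
    {x : ℝ} (hx : 0 < x) :
    (P {ω | ∃ j ∈ Finset.range (N + 1), x ≤ |g j ω|}).toReal
      ≤ (∫ ω, |g N ω| ^ p ∂P) / x ^ p := by
  have hp0 : 0 < p := hpq.pos
  have hq0 : 0 < q := hpq.symm.pos
  have hsub := aux_abs_submartingale hg
  have hnonneg : (0 : ℕ → Ω → ℝ) ≤ fun n ω => |g n ω| := fun n ω => abs_nonneg _
  set A : Set Ω := {ω | ∃ j ∈ Finset.range (N + 1), x ≤ |g j ω|} with hA_def
  have hAm : MeasurableSet A := by
    have : A = ⋃ j ∈ Finset.range (N + 1), {ω | x ≤ |g j ω|} := by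
      ext ω; simp [hA_def]
    rw [this]
    exact (Finset.range (N + 1)).measurableSet_biUnion fun j _ =>
      measurableSet_le measurable_const ((hg.stronglyMeasurable j).measurable.le (ℱ.le j)).abs
  have hAeq : A = {ω | ((x.toNNReal : ℝ)) ≤
      (Finset.range (N + 1)).sup' Finset.nonempty_range_add_one fun k => |g k ω|} := by
    ext ω
    simp only [Set.mem_setOf_eq, Real.coe_toNNReal _ hx.le, Finset.le_sup'_iff, hA_def]
  have hmax := maximal_ineq hsub hnonneg (ε := x.toNNReal) N
  rw [← hAeq] at hmax
  set α := (P A).toReal with hα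
  have hintA : 0 ≤ ∫ ω in A, |g N ω| ∂P :=
    setIntegral_nonneg hAm fun ω _ => abs_nonneg _
  have h1 : x * α ≤ ∫ ω in A, |g N ω| ∂P := by
    have h := ENNReal.toReal_mono ENNReal.ofReal_ne_top hmax
    rw [ENNReal.toReal_mul, ENNReal.toReal_ofReal hintA] at h
    simpa [NNReal.smul_def, Real.coe_toNNReal _ hx.le] using h
  -- Hölder
  have hGN : Integrable (g N) P := hg.integrable N
  have hne : ENNReal.ofReal p ≠ 0 := by
    simp [ENNReal.ofReal_eq_zero, not_le, hp0]
  have hmem : MemLp (g N) (ENNReal.ofReal p) P := by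
    have h2' : MemLp (fun ω => ‖g N ω‖ ^ (ENNReal.ofReal p).toReal)
        (ENNReal.ofReal p / ENNReal.ofReal p) P := by
      rw [ENNReal.div_self hne ENNReal.ofReal_ne_top, ENNReal.toReal_ofReal hp0.le,
        memLp_one_iff_integrable]
      simpa [Real.norm_eq_abs] using hgp
    exact (memLp_norm_rpow_iff hGN.aestronglyMeasurable hne ENNReal.ofReal_ne_top).1 h2'
  have hmemabs : MemLp (fun ω => |g N ω|) (ENNReal.ofReal p) P := by
    simpa [Real.norm_eq_abs] using hmem.norm
  have hind : MemLp (A.indicator fun _ => (1 : ℝ)) (ENNReal.ofReal q) P :=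
    memLp_indicator_const _ hAm 1 (Or.inr (measure_ne_top _ _))
  have hH := integral_mul_le_Lp_mul_Lq_of_nonneg hpq
    (Eventually.of_forall fun ω => abs_nonneg (g N ω))
    (Eventually.of_forall fun ω => Set.indicator_nonneg (fun _ _ => zero_le_one) ω)
    hmemabs hind
  have e1 : ∫ ω, |g N ω| * (A.indicator (fun _ => (1 : ℝ)) ω) ∂P
      = ∫ ω in A, |g N ω| ∂P := by
    rw [← integral_indicator hAm]
    congr 1
    funext ω
    by_cases h : ω ∈ A <;> simp [h]
  have e2 : ∫ ω, (A.indicator (fun _ => (1 : ℝ)) ω) ^ q ∂P = α := by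
    have h3 : (fun ω => (A.indicator (fun _ => (1 : ℝ)) ω) ^ q)
        = A.indicator fun _ => (1 : ℝ) := by
      funext ω
      by_cases h : ω ∈ A <;>
        simp [h, Real.zero_rpow hq0.ne', Real.one_rpow]
    rw [h3, integral_indicator_const _ hAm]
    simp [hα, Measure.real_def]
  rw [e1, e2] at hH
  set I := ∫ ω, |g N ω| ^ p ∂P with hI
  have hInn : 0 ≤ I := integral_nonneg fun ω => Real.rpow_nonneg (abs_nonneg _) _
  have hxp : 0 < x ^ p := Real.rpow_pos_of_pos hx _
  rcases eq_or_lt_of_le (ENNReal.toReal_nonneg : (0:ℝ) ≤ α) with h0 | hαpos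
  · rw [hα, ← h0]; positivity
  · have key : x * α ≤ I ^ (1 / p) * α ^ (1 / q) := h1.trans hH
    have hαq : (0 : ℝ) < α ^ (1 / q) := Real.rpow_pos_of_pos hαpos _
    have hsplit : α = α ^ (1 / p) * α ^ (1 / q) := by
      rw [← Real.rpow_add hαpos]
      rw [show 1 / p + 1 / q = 1 by
        simpa [one_div] using hpq.inv_add_inv_eq_one]
      rw [Real.rpow_one]
    have key2 : x * α ^ (1 / p) ≤ I ^ (1 / p) := by
      have h' : x * α ^ (1 / p) * α ^ (1 / q) ≤ I ^ (1 / p) * α ^ (1 / q) := by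
        calc x * α ^ (1 / p) * α ^ (1 / q) = x * α := by rw [mul_assoc, ← hsplit]
        _ ≤ I ^ (1 / p) * α ^ (1 / q) := key
      exact le_of_mul_le_mul_right h' hαq
    have key3 : (x * α ^ (1 / p)) ^ p ≤ (I ^ (1 / p)) ^ p :=
      Real.rpow_le_rpow (by positivity) key2 hp0.le
    have eL : (x * α ^ (1 / p)) ^ p = x ^ p * α := by
      rw [Real.mul_rpow hx.le (Real.rpow_nonneg hαpos.le _),
        ← Real.rpow_mul hαpos.le, one_div_mul_cancel hp0.ne', Real.rpow_one]
    have eR : (I ^ (1 / p)) ^ p = I := by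
      rw [← Real.rpow_mul hInn, one_div_mul_cancel hp0.ne', Real.rpow_one]
    rw [eL, eR] at key3
    rw [le_div_iff₀ hxp]
    linarith



/-- Maximal tail inequality (6.4):
`Pr{√m · sup_{n ≥ m} |S_n/n| ≥ a} ≤ 6.75 · c · E|N(0,1)|^{2+λ} / a^{2+λ}`. -/
theorem partial_sum_sup_tail_inequality
    {Ω : Type*} [MeasurableSpace Ω]
    (P : Measure Ω) [IsProbabilityMeasure P]
    (Z : ℕ → Ω → ℝ) (hZ : IsIIDSeq P Z)
    (hmean : ∫ ω, Z 0 ω ∂P = 0)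
    (hvar : ∫ ω, (Z 0 ω) ^ 2 ∂P = 1)
    (lam : ℝ) (hlam : 0 ≤ lam)
    (hmom : Integrable (fun ω => |Z 0 ω| ^ (2 + lam)) P)
    (S : ℕ → Ω → ℝ) (hS : ∀ n ω, S n ω = ∑ i ∈ Finset.range n, Z i ω)
    (c : ℝ)
    (hc : ∀ n : ℕ, 1 ≤ n →
      ∫ ω, |S n ω| ^ (2 + lam) ∂P ≤
        c * (n : ℝ) ^ (1 + lam / 2) * ∫ x, |x| ^ (2 + lam) ∂(gaussianReal 0 1)) :
    ∀ m : ℕ, 1 ≤ m → ∀ a : ℝ, 0 < a →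
      (P {ω | a ≤ Real.sqrt m * ⨆ n : {n : ℕ // m ≤ n}, |S n.1 ω / (n.1 : ℝ)|}).toReal ≤
        6.75 * c * (∫ x, |x| ^ (2 + lam) ∂(gaussianReal 0 1)) / a ^ (2 + lam) := by
  obtain ⟨hZmeas, hZindep, hZdist⟩ := hZ
  have hZsm : ∀ i, StronglyMeasurable (Z i) := fun i => (hZmeas i).stronglyMeasurable
  set p : ℝ := 2 + lam with hp_def
  set t : ℝ := 1 + lam / 2 with ht_def
  have hp1 : (1 : ℝ) < p := by rw [hp_def]; linarith
  have hp0 : (0 : ℝ) < p := by linarith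
  have ht0 : (0 : ℝ) < t := by rw [ht_def]; linarith
  have hp2t : p = 2 * t := by rw [hp_def, ht_def]; ring
  set q : ℝ := Real.conjExponent p with hq_def
  have hpq : p.HolderConjugate q := Real.HolderConjugate.conjExponent hp1
  -- basic integrability facts
  have hZ0int : Integrable (Z 0) P := by
    refine Integrable.mono' ((integrable_const (1 : ℝ)).add hmom)
      (hZsm 0).aestronglyMeasurable (Eventually.of_forall fun ω => ?_)
    simp only [Pi.add_apply, Real.norm_eq_abs]
    rcases le_or_gt (|Z 0 ω|) 1 with h | h
    · have h2 : (0 : ℝ) ≤ |Z 0 ω| ^ p := Real.rpow_nonneg (abs_nonneg _) _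
      linarith
    · have h1 : |Z 0 ω| ^ (1 : ℝ) ≤ |Z 0 ω| ^ p :=
        Real.rpow_le_rpow_of_exponent_le h.le (by linarith)
      rw [Real.rpow_one] at h1
      linarith
  have hZint : ∀ i, Integrable (Z i) P := by
    intro i
    have h := integrable_map_measure (aestronglyMeasurable_id (μ := P.map (Z i)))
      (hZmeas i).aemeasurable
    have h0 := integrable_map_measure (aestronglyMeasurable_id (μ := P.map (Z 0)))
      (hZmeas 0).aemeasurable
    rw [hZdist i] at h
    exact h.1 (h0.2 hZ0int)
  have hZmean0 : ∀ i, ∫ ω, Z i ω ∂P = 0 := by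
    intro i
    have h1 : ∫ ω, Z i ω ∂P = ∫ x, x ∂(P.map (Z i)) :=
      (integral_map (hZmeas i).aemeasurable aestronglyMeasurable_id).symm
    have h2 : ∫ x, x ∂(P.map (Z 0)) = ∫ ω, Z 0 ω ∂P :=
      integral_map (hZmeas 0).aemeasurable aestronglyMeasurable_id
    rw [h1, hZdist i, h2]
    exact hmean
  have habsm : Measurable fun x : ℝ => |x| ^ p := measurable_id.abs.pow_const p
  have hZpint : ∀ i, Integrable (fun ω => |Z i ω| ^ p) P := by
    intro i
    have h := integrable_map_measure
      (habsm.aestronglyMeasurable (μ := P.map (Z i))) (hZmeas i).aemeasurable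
    have h0 := integrable_map_measure
      (habsm.aestronglyMeasurable (μ := P.map (Z 0))) (hZmeas 0).aemeasurable
    rw [hZdist i] at h
    exact h.1 (h0.2 hmom)
  have hSdef : ∀ n, S n = fun ω => ∑ i ∈ Finset.range n, Z i ω := fun n => funext (hS n)
  have hSint : ∀ n, Integrable (S n) P := by
    intro n; rw [hSdef n]; exact integrable_finset_sum _ fun i _ => hZint i
  have hSmeas : ∀ n, Measurable (S n) := by
    intro n; rw [hSdef n]; exact Finset.measurable_sum _ fun i _ => hZmeas i
  have hSpint : ∀ n, 1 ≤ n → Integrable (fun ω => |S n ω| ^ p) P := by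
    intro n hn
    have hne : (Finset.range n).Nonempty := Finset.nonempty_range_iff.2 (by omega)
    refine Integrable.mono'
      ((integrable_finset_sum (Finset.range n) fun i _ => hZpint i).const_mul ((n : ℝ) ^ p))
      ((hSmeas n).abs.pow_const p).aestronglyMeasurable (Eventually.of_forall fun ω => ?_)
    obtain ⟨i0, hi0mem, hi0⟩ := Finset.exists_mem_eq_sup' hne fun i => |Z i ω|
    have hsum : |S n ω| ≤ (n : ℝ) * |Z i0 ω| := by
      rw [hS n ω]
      calc |∑ i ∈ Finset.range n, Z i ω| ≤ ∑ i ∈ Finset.range n, |Z i ω| :=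
            Finset.abs_sum_le_sum_abs _ _
        _ ≤ (Finset.range n).card • |Z i0 ω| :=
            Finset.sum_le_card_nsmul _ _ _ fun i hi => by
              rw [← hi0]; exact Finset.le_sup' (fun j => |Z j ω|) hi
        _ = (n : ℝ) * |Z i0 ω| := by simp [nsmul_eq_mul]
    have h2 : |S n ω| ^ p ≤ ((n : ℝ) * |Z i0 ω|) ^ p :=
      Real.rpow_le_rpow (abs_nonneg _) hsum hp0.le
    have h3 : ((n : ℝ) * |Z i0 ω|) ^ p = (n : ℝ) ^ p * |Z i0 ω| ^ p :=
      Real.mul_rpow (Nat.cast_nonneg n) (abs_nonneg _)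
    have h4 : |Z i0 ω| ^ p ≤ ∑ i ∈ Finset.range n, |Z i ω| ^ p :=
      Finset.single_le_sum (f := fun i => |Z i ω| ^ p)
        (fun i _ => Real.rpow_nonneg (abs_nonneg _) _) hi0mem
    rw [Real.norm_of_nonneg (Real.rpow_nonneg (abs_nonneg _) _)]
    have hnp : (0 : ℝ) ≤ (n : ℝ) ^ p := Real.rpow_nonneg (Nat.cast_nonneg n) _
    calc |S n ω| ^ p ≤ (n : ℝ) ^ p * |Z i0 ω| ^ p := h3 ▸ h2
      _ ≤ (n : ℝ) ^ p * ∑ i ∈ Finset.range n, |Z i ω| ^ p :=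
          mul_le_mul_of_nonneg_left h4 hnp
  -- the martingale of partial sums
  set ℱ := Filtration.natural Z hZsm with hℱ_def
  set g : ℕ → Ω → ℝ := fun n => S (n + 1) with hg_def
  have hadp : StronglyAdapted ℱ g := by
    intro n
    have hmeas : ∀ i ∈ Finset.range (n + 1), Measurable[ℱ n] (Z i) := by
      intro i hi
      exact ((Filtration.stronglyAdapted_natural hZsm i).measurable).le
        (ℱ.mono (Nat.lt_succ_iff.1 (Finset.mem_range.1 hi)))
    have : Measurable[ℱ n] (fun ω => ∑ i ∈ Finset.range (n + 1), Z i ω) :=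
      Finset.measurable_sum _ hmeas
    have heq : g n = fun ω => ∑ i ∈ Finset.range (n + 1), Z i ω := by
      rw [hg_def]; exact hSdef (n + 1)
    rw [heq]
    exact this.stronglyMeasurable
  have hmart : Martingale g ℱ P := by
    refine martingale_nat hadp (fun n => hSint (n + 1)) fun n => ?_
    have hsplit : g (n + 1) = g n + Z (n + 1) := by
      funext ω
      simp only [hg_def, Pi.add_apply, hS]
      exact Finset.sum_range_succ _ _
    rw [hsplit]
    refine EventuallyEq.symm (((condExp_add (hSint (n + 1)) (hZint (n + 1)) _).trans ?_))
    have h1 : P[g n|ℱ n] = g n :=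
      condExp_of_stronglyMeasurable (ℱ.le n) (hadp n) (hSint (n + 1))
    have h2 : P[Z (n + 1)|ℱ n] =ᵐ[P] fun _ => ∫ ω, Z (n + 1) ω ∂P :=
      hZindep.condExp_natural_ae_eq_of_lt hZsm (Nat.lt_succ_self n)
    filter_upwards [h2] with ω hω
    simp only [Pi.add_apply, h1, hω, hZmean0 (n + 1), add_zero]
    exact congrFun h1 ω
  -- positivity of c * G
  set G := ∫ x, |x| ^ p ∂(gaussianReal 0 1) with hG_def
  have hGnn : 0 ≤ G := integral_nonneg fun x => Real.rpow_nonneg (abs_nonneg _) _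
  have hZ0ppos : 0 < ∫ ω, |Z 0 ω| ^ p ∂P := by
    rw [integral_pos_iff_support_of_nonneg
      (fun ω => Real.rpow_nonneg (abs_nonneg _) _) (hZpint 0)]
    by_contra h
    push_neg at h
    rw [le_zero_iff] at h
    have hz : ∀ᵐ ω ∂P, Z 0 ω = 0 := by
      filter_upwards [measure_eq_zero_iff_ae_notMem.1 h] with ω hω
      have h0 : |Z 0 ω| ^ p = 0 := Function.notMem_support.1 hω
      have := (Real.rpow_eq_zero (abs_nonneg _) hp0.ne').1 h0
      exact abs_eq_zero.1 this
    have h1 : ∫ ω, (Z 0 ω) ^ 2 ∂P = 0 := by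
      rw [integral_congr_ae (g := fun _ => (0 : ℝ)) (hz.mono fun ω h => by rw [h]; norm_num)]
      simp
    rw [hvar] at h1
    norm_num at h1
  have hcG : 0 < c * G := by
    have h := hc 1 le_rfl
    have hS1 : (fun ω => |S 1 ω| ^ p) = fun ω => |Z 0 ω| ^ p := by
      funext ω; rw [hS]; simp
    rw [hS1] at h
    simp only [Nat.cast_one, Real.one_rpow, mul_one] at h
    calc (0 : ℝ) < ∫ ω, |Z 0 ω| ^ p ∂P := hZ0ppos
      _ ≤ c * G := h
  -- main estimate
  intro m hm a ha
  have hmR : (1 : ℝ) ≤ (m : ℝ) := by exact_mod_cast hm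
  have hmpos : (0 : ℝ) < m := by linarith
  have hsm : 0 < Real.sqrt m := Real.sqrt_pos.2 hmpos
  set r : ℝ := 2 ^ (1 / t) with hr_def
  have hr1 : 1 < r :=
    (Real.one_lt_rpow_iff_of_pos (by norm_num)).2 (Or.inl ⟨one_lt_two, by positivity⟩)
  have hr0 : (0 : ℝ) < r := lt_trans one_pos hr1
  have hrt : r ^ t = 2 := by
    rw [hr_def, ← Real.rpow_mul (by norm_num : (0:ℝ) ≤ 2), one_div_mul_cancel ht0.ne',
      Real.rpow_one]
  set θ : ℝ := (16 / 27 : ℝ) ^ (1 / p) with hθ_def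
  have hθpos : 0 < θ := Real.rpow_pos_of_pos (by norm_num) _
  have hθlt1 : θ < 1 := Real.rpow_lt_one (by norm_num) (by norm_num) (by positivity)
  have hθp : θ ^ p = 16 / 27 := by
    rw [hθ_def, ← Real.rpow_mul (by norm_num), one_div_mul_cancel hp0.ne', Real.rpow_one]
  set a' : ℝ := θ * a with ha'_def
  have ha'pos : 0 < a' := mul_pos hθpos ha
  have ha'lt : a' < a := by
    rw [ha'_def]
    exact mul_lt_of_lt_one_left ha hθlt1
  set ρ : ℕ → ℝ := fun k => r ^ (k : ℝ) with hρ_def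
  have hρpos : ∀ k, 0 < ρ k := fun k => Real.rpow_pos_of_pos hr0 _
  have hρ1 : ∀ k, 1 ≤ ρ k := fun k => Real.one_le_rpow hr1.le (Nat.cast_nonneg k)
  set Nk : ℕ → ℕ := fun k => ⌊(m : ℝ) * ρ (k + 1)⌋₊ with hNk_def
  have hNk1 : ∀ k, 1 ≤ Nk k := by
    intro k
    refine Nat.le_floor ?_
    push_cast
    nlinarith [hρ1 (k + 1)]
  have hNkle : ∀ k, (Nk k : ℝ) ≤ (m : ℝ) * ρ (k + 1) := fun k =>
    Nat.floor_le (by positivity)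
  set x : ℕ → ℝ := fun k => a' * Real.sqrt m * ρ k with hx_def
  have hxpos : ∀ k, 0 < x k := fun k => by
    have := hρpos k
    rw [hx_def]
    positivity
  set A : ℕ → Set Ω := fun k => {ω | ∃ j ∈ Finset.range ((Nk k - 1) + 1), x k ≤ |g j ω|}
    with hA_def
  -- inclusion of the sup event into the union of block events
  have hincl : {ω | a ≤ Real.sqrt m * ⨆ n : {n : ℕ // m ≤ n}, |S n.1 ω / (n.1 : ℝ)|}
      ⊆ ⋃ k, A k := by
    intro ω hω
    simp only [Set.mem_setOf_eq] at hω
    haveI : Nonempty {n : ℕ // m ≤ n} := ⟨⟨m, le_rfl⟩⟩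
    have hex : ∃ n : {n : ℕ // m ≤ n}, a' / Real.sqrt m < |S n.1 ω / (n.1 : ℝ)| := by
      by_contra hcon
      push_neg at hcon
      have hb : (⨆ n : {n : ℕ // m ≤ n}, |S n.1 ω / (n.1 : ℝ)|) ≤ a' / Real.sqrt m :=
        ciSup_le hcon
      have h1 : a ≤ Real.sqrt m * (a' / Real.sqrt m) :=
        hω.trans (mul_le_mul_of_nonneg_left hb hsm.le)
      rw [mul_div_cancel₀ _ hsm.ne'] at h1
      exact absurd h1 (not_le.2 ha'lt)
    obtain ⟨⟨n, hmn⟩, hn⟩ := hex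
    have hn0 : 0 < n := lt_of_lt_of_le hm hmn
    have hnR : (0 : ℝ) < n := by exact_mod_cast hn0
    have hSn : a' * n / Real.sqrt m < |S n ω| := by
      have hd : |S n ω / (n : ℝ)| = |S n ω| / n := by rw [abs_div, abs_of_pos hnR]
      rw [hd] at hn
      have := (div_lt_div_iff₀ hsm hnR).1 hn
      rw [div_lt_iff₀ hsm]
      linarith
    set k := ⌊Real.logb r ((n : ℝ) / m)⌋₊ with hk_def
    have hnm1 : (1 : ℝ) ≤ (n : ℝ) / m := by
      rw [le_div_iff₀ hmpos]
      simpa using (by exact_mod_cast hmn : (m : ℝ) ≤ n)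
    have hlogb_nonneg : 0 ≤ Real.logb r ((n : ℝ) / m) := Real.logb_nonneg hr1 hnm1
    have hlb : (m : ℝ) * ρ k ≤ n := by
      have h1 : ρ k ≤ (n : ℝ) / m := by
        rw [hρ_def]
        calc r ^ (k : ℝ) ≤ r ^ Real.logb r ((n : ℝ) / m) :=
              Real.rpow_le_rpow_of_exponent_le hr1.le (Nat.floor_le hlogb_nonneg)
          _ = (n : ℝ) / m := Real.rpow_logb hr0 hr1.ne' (by linarith)
      rw [le_div_iff₀ hmpos] at h1
      linarith
    have hub : (n : ℝ) < m * ρ (k + 1) := by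
      have h1 : (n : ℝ) / m < ρ (k + 1) := by
        rw [hρ_def]
        have h2 : Real.logb r ((n : ℝ) / m) < (k : ℝ) + 1 := Nat.lt_floor_add_one _
        calc (n : ℝ) / m = r ^ Real.logb r ((n : ℝ) / m) :=
              (Real.rpow_logb hr0 hr1.ne' (by linarith)).symm
          _ < r ^ (((k + 1 : ℕ) : ℝ)) := by
              apply Real.rpow_lt_rpow_of_exponent_lt hr1
              push_cast
              linarith
      rw [div_lt_iff₀ hmpos] at h1
      linarith
    have hnNk : n ≤ Nk k := Nat.le_floor hub.le
    refine Set.mem_iUnion.2 ⟨k, ?_⟩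
    have hjmem : n - 1 ∈ Finset.range ((Nk k - 1) + 1) := by
      rw [Finset.mem_range]
      have := hNk1 k
      omega
    refine ⟨n - 1, hjmem, ?_⟩
    have hgn : g (n - 1) ω = S n ω := by
      have hn1 : n - 1 + 1 = n := by omega
      show S (n - 1 + 1) ω = S n ω
      rw [hn1]
    rw [hgn]
    have h2 : x k ≤ a' * n / Real.sqrt m := by
      have hmsq : Real.sqrt m * Real.sqrt m = m := Real.mul_self_sqrt hmpos.le
      rw [hx_def, le_div_iff₀ hsm]
      calc a' * Real.sqrt m * ρ k * Real.sqrt m = a' * ((m : ℝ) * ρ k) := by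
            rw [show a' * Real.sqrt m * ρ k * Real.sqrt m
              = a' * ρ k * (Real.sqrt m * Real.sqrt m) by ring, hmsq]; ring
        _ ≤ a' * n := mul_le_mul_of_nonneg_left hlb ha'pos.le
    exact h2.trans hSn.le
  -- per-block bound via Doob + Hölder
  have hAk : ∀ k, P (A k) ≤
      ENNReal.ofReal ((c * G) * ((m : ℝ) * ρ (k + 1)) ^ t / x k ^ p) := by
    intro k
    have heq : Nk k - 1 + 1 = Nk k := by have := hNk1 k; omega
    have hint : Integrable (fun ω => |g (Nk k - 1) ω| ^ p) P := by
      show Integrable (fun ω => |S (Nk k - 1 + 1) ω| ^ p) P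
      rw [heq]
      exact hSpint (Nk k) (hNk1 k)
    have hd := aux_doob hmart hpq (Nk k - 1) hint (hxpos k)
    have hint_eq : (∫ ω, |g (Nk k - 1) ω| ^ p ∂P) = ∫ ω, |S (Nk k) ω| ^ p ∂P := by
      show (∫ ω, |S (Nk k - 1 + 1) ω| ^ p ∂P) = _
      rw [heq]
    rw [hint_eq] at hd
    have hcN := hc (Nk k) (hNk1 k)
    have hmono : ((Nk k : ℝ)) ^ t ≤ ((m : ℝ) * ρ (k + 1)) ^ t :=
      Real.rpow_le_rpow (Nat.cast_nonneg _) (hNkle k) ht0.le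
    have hchain : ∫ ω, |S (Nk k) ω| ^ p ∂P ≤ (c * G) * ((m : ℝ) * ρ (k + 1)) ^ t := by
      calc ∫ ω, |S (Nk k) ω| ^ p ∂P ≤ c * (Nk k : ℝ) ^ t * G := hcN
        _ = (c * G) * (Nk k : ℝ) ^ t := by ring
        _ ≤ (c * G) * ((m : ℝ) * ρ (k + 1)) ^ t := mul_le_mul_of_nonneg_left hmono hcG.le
    have hd2 : (P (A k)).toReal ≤ (c * G) * ((m : ℝ) * ρ (k + 1)) ^ t / x k ^ p :=
      hd.trans (div_le_div_of_nonneg_right hchain (Real.rpow_pos_of_pos (hxpos k) p).le)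
    exact (ENNReal.le_ofReal_iff_toReal_le (measure_ne_top _ _) (by positivity)).2 hd2
  -- geometric series computation
  have hterm : ∀ k, (c * G) * ((m : ℝ) * ρ (k + 1)) ^ t / x k ^ p
      = (2 * (c * G) / a' ^ p) * (1 / 2 : ℝ) ^ k := by
    intro k
    set B : ℝ := 2 ^ (k : ℝ) with hB_def
    have hBpos : 0 < B := Real.rpow_pos_of_pos (by norm_num) _
    have e0 : ρ (k + 1) ^ t = 2 * B := by
      rw [hρ_def]
      push_cast
      calc (r ^ ((k : ℝ) + 1)) ^ t = r ^ (((k : ℝ) + 1) * t) := (Real.rpow_mul hr0.le _ _).symm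
        _ = r ^ (t * ((k : ℝ) + 1)) := by ring_nf
        _ = (r ^ t) ^ ((k : ℝ) + 1) := Real.rpow_mul hr0.le _ _
        _ = 2 ^ ((k : ℝ) + 1) := by rw [hrt]
        _ = 2 ^ (k : ℝ) * 2 ^ (1 : ℝ) := by rw [← Real.rpow_add (by norm_num)]
        _ = 2 * B := by rw [hB_def, Real.rpow_one]; ring
    have e1 : ((m : ℝ) * ρ (k + 1)) ^ t = (m : ℝ) ^ t * (2 * B) := by
      rw [Real.mul_rpow hmpos.le (hρpos _).le, e0]
    have eρ : ρ k ^ p = B ^ 2 := by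
      rw [hρ_def]
      calc (r ^ (k : ℝ)) ^ p = r ^ ((k : ℝ) * p) := (Real.rpow_mul hr0.le _ _).symm
        _ = r ^ (t * (k : ℝ) * 2) := by rw [hp2t]; ring_nf
        _ = ((r ^ t) ^ (k : ℝ)) ^ (2 : ℝ) := by
              rw [← Real.rpow_mul hr0.le, ← Real.rpow_mul hr0.le]
        _ = B ^ (2 : ℝ) := by rw [hrt, ← hB_def]
        _ = B ^ 2 := by rw [show ((2 : ℝ) : ℝ) = ((2 : ℕ) : ℝ) by norm_num,
              Real.rpow_natCast]
    have esq : Real.sqrt m ^ p = (m : ℝ) ^ t := by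
      rw [Real.sqrt_eq_rpow, ← Real.rpow_mul hmpos.le]
      congr 1
      rw [hp2t]; ring
    have e2 : x k ^ p = a' ^ p * (m : ℝ) ^ t * B ^ 2 := by
      rw [hx_def]
      rw [Real.mul_rpow (by positivity) (hρpos k).le,
        Real.mul_rpow ha'pos.le (Real.sqrt_nonneg _), esq, eρ]
    rw [e1, e2]
    have hmt : (0 : ℝ) < (m : ℝ) ^ t := Real.rpow_pos_of_pos hmpos _
    have hap : (0 : ℝ) < a' ^ p := Real.rpow_pos_of_pos ha'pos _
    have hhalf : (1 / 2 : ℝ) ^ k = B⁻¹ := by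
      rw [hB_def, Real.rpow_natCast (2 : ℝ) k]
      simp [one_div, inv_pow]
    rw [hhalf]
    field_simp
  -- summing up
  have hsummable : Summable fun k : ℕ => (2 * (c * G) / a' ^ p) * (1 / 2 : ℝ) ^ k :=
    (summable_geometric_of_lt_one (by norm_num) (by norm_num)).mul_left _
  have htsum : ∑' k : ℕ, (2 * (c * G) / a' ^ p) * (1 / 2 : ℝ) ^ k
      = 4 * (c * G) / a' ^ p := by
    rw [tsum_mul_left, tsum_geometric_of_lt_one (by norm_num) (by norm_num)]
    norm_num
    ring
  have hnonneg_term : ∀ k : ℕ, 0 ≤ (2 * (c * G) / a' ^ p) * (1 / 2 : ℝ) ^ k := by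
    intro k
    have hap : (0 : ℝ) < a' ^ p := Real.rpow_pos_of_pos ha'pos _
    positivity
  have hsum2 : P {ω | a ≤ Real.sqrt m * ⨆ n : {n : ℕ // m ≤ n}, |S n.1 ω / (n.1 : ℝ)|}
      ≤ ENNReal.ofReal (4 * (c * G) / a' ^ p) := by
    calc P {ω | a ≤ Real.sqrt m * ⨆ n : {n : ℕ // m ≤ n}, |S n.1 ω / (n.1 : ℝ)|}
        ≤ P (⋃ k, A k) := measure_mono hincl
      _ ≤ ∑' k, P (A k) := measure_iUnion_le _
      _ ≤ ∑' k, ENNReal.ofReal ((2 * (c * G) / a' ^ p) * (1 / 2 : ℝ) ^ k) :=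
          ENNReal.tsum_le_tsum fun k => (hAk k).trans_eq (by rw [hterm k])
      _ = ENNReal.ofReal (∑' k : ℕ, (2 * (c * G) / a' ^ p) * (1 / 2 : ℝ) ^ k) :=
          (ENNReal.ofReal_tsum_of_nonneg hnonneg_term hsummable).symm
      _ = ENNReal.ofReal (4 * (c * G) / a' ^ p) := by rw [htsum]
  have hfinal : (P {ω | a ≤ Real.sqrt m *
      ⨆ n : {n : ℕ // m ≤ n}, |S n.1 ω / (n.1 : ℝ)|}).toReal ≤ 4 * (c * G) / a' ^ p := by
    refine ENNReal.toReal_le_of_le_ofReal ?_ hsum2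
    have hap : (0 : ℝ) < a' ^ p := Real.rpow_pos_of_pos ha'pos _
    positivity
  have hconv : 4 * (c * G) / a' ^ p = 6.75 * c * G / a ^ p := by
    rw [ha'_def, Real.mul_rpow hθpos.le ha.le, hθp]
    have hap : (0 : ℝ) < a ^ p := Real.rpow_pos_of_pos ha _
    field_simp
    ring
  calc (P {ω | a ≤ Real.sqrt m * ⨆ n : {n : ℕ // m ≤ n}, |S n.1 ω / (n.1 : ℝ)|}).toReal
      ≤ 4 * (c * G) / a' ^ p := hfinal
    _ = 6.75 * c * G / a ^ p := hconv


end
end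

section
/- Let W be a standard Brownian motion and let b ≥ 0. Then E[ μ{ t ≥ b : |W(t)| ≥ t } ] = E[ (Z² − b) · 1{Z² ≥ b} ], where μ is Lebesgue measure on [0,∞) and Z is a standard normal random variable. In particular, for b = 0 the expected value equals 1. -/
open MeasureTheory ProbabilityTheory Filter Set Topology

noncomputable section

section AuxLemmas
open Real

lemma aux_swap_lintegral {α β : Type*} [MeasurableSpace α] [MeasurableSpace β]
    (μ : Measure α) (ν : Measure β) [SigmaFinite μ] [SigmaFinite ν]
    {B : Set (α × β)} (hB : MeasurableSet B) :
    ∫⁻ x, ν {y | (x, y) ∈ B} ∂μ = ∫⁻ y, μ {x | (x, y) ∈ B} ∂ν := by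
  trans (μ.prod ν) B
  · exact (Measure.prod_apply hB).symm
  · exact Measure.prod_apply_symm hB

lemma aux_I2 : ∫ x : ℝ, x ^ 2 * rexp (-(1/2) * x ^ 2) = Real.sqrt (2 * π) := by
  have h1 : ∫ x : ℝ, x ^ 2 * rexp (-(1/2) * x ^ 2)
      = 2 * ∫ x in Ioi (0:ℝ), x ^ 2 * rexp (-(1/2) * x ^ 2) := by
    rw [← integral_comp_abs (f := fun x => x ^ 2 * rexp (-(1/2) * x ^ 2))]
    congr 1; funext x; rw [sq_abs]
  have h2 : ∫ x in Ioi (0:ℝ), x ^ 2 * rexp (-(1/2) * x ^ 2)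
      = (1/2:ℝ) ^ (-((2:ℝ) + 1)/2) * (1/(2:ℝ)) * Real.Gamma (((2:ℝ) + 1)/2) := by
    rw [← integral_rpow_mul_exp_neg_mul_rpow (by norm_num) (by norm_num : (-1:ℝ) < 2)
      (by norm_num : (0:ℝ) < 1/2)]
    refine setIntegral_congr_fun measurableSet_Ioi (fun x hx => ?_)
    rw [show ((2:ℝ)) = ((2:ℕ):ℝ) by norm_num, Real.rpow_natCast]
  have hG : Real.Gamma (((2:ℝ) + 1)/2) = (1/2) * Real.sqrt π := by
    rw [show ((2:ℝ) + 1)/2 = 1/2 + 1 by norm_num, Real.Gamma_add_one (by norm_num),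
      Real.Gamma_one_half_eq]
  have hp : (1/2:ℝ) ^ (-((2:ℝ) + 1)/2) = 2 * Real.sqrt 2 := by
    rw [show (-((2:ℝ)+1)/2) = -(3/2 : ℝ) by norm_num, one_div,
      Real.inv_rpow (by norm_num), Real.rpow_neg (by norm_num), inv_inv,
      show (3/2 : ℝ) = 1 + 1/2 by norm_num, Real.rpow_add (by norm_num),
      Real.rpow_one, ← Real.sqrt_eq_rpow]
  rw [h1, h2, hG, hp, Real.sqrt_mul (by norm_num) π]
  ring

lemma aux_J : ∫⁻ x, ENNReal.ofReal (x ^ 2) ∂(gaussianReal 0 1) = 1 := by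
  have hint : Integrable (fun x : ℝ => gaussianPDFReal 0 1 x * x ^ 2) volume := by
    have heq : (fun x : ℝ => gaussianPDFReal 0 1 x * x ^ 2)
        = fun x => (Real.sqrt (2 * π))⁻¹ * (x ^ 2 * rexp (-(1/2) * x ^ 2)) := by
      funext x
      simp only [gaussianPDFReal, NNReal.coe_one, mul_one, sub_zero]
      rw [show -x^2/(2:ℝ) = -(1/2)*x^2 by ring]
      ring
    rw [heq]
    have h := integrable_rpow_mul_exp_neg_mul_sq (by norm_num : (0:ℝ) < 1/2)
      (by norm_num : (-1:ℝ) < 2)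
    have h2 : (fun x : ℝ => x ^ (2:ℝ) * rexp (-(1/2) * x ^ 2))
        = fun x : ℝ => x ^ 2 * rexp (-(1/2) * x ^ 2) := by
      funext x
      rw [show ((2:ℝ)) = ((2:ℕ):ℝ) by norm_num, Real.rpow_natCast]
    rw [h2] at h
    exact h.const_mul _
  have hval : ∫ x : ℝ, gaussianPDFReal 0 1 x * x ^ 2 = 1 := by
    have heq : (fun x : ℝ => gaussianPDFReal 0 1 x * x ^ 2)
        = fun x => (Real.sqrt (2 * π))⁻¹ * (x ^ 2 * rexp (-(1/2) * x ^ 2)) := by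
      funext x
      simp only [gaussianPDFReal, NNReal.coe_one, mul_one, sub_zero]
      rw [show -x^2/(2:ℝ) = -(1/2)*x^2 by ring]
      ring
    rw [heq, integral_const_mul, aux_I2, inv_mul_cancel₀]
    positivity
  rw [gaussianReal_of_var_ne_zero 0 one_ne_zero,
    lintegral_withDensity_eq_lintegral_mul _ (measurable_gaussianPDF 0 1)
      (by exact (measurable_id.pow_const 2).ennreal_ofReal)]
  have : (fun x => (gaussianPDF 0 1 * fun x : ℝ => ENNReal.ofReal (x ^ 2)) x)
      = fun x : ℝ => ENNReal.ofReal (gaussianPDFReal 0 1 x * x ^ 2) := by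
    funext x
    simp only [Pi.mul_apply, gaussianPDF]
    rw [ENNReal.ofReal_mul (gaussianPDFReal_nonneg 0 1 x)]
  rw [this, ← ofReal_integral_eq_lintegral_ofReal hint
    (Eventually.of_forall fun x => mul_nonneg (gaussianPDFReal_nonneg 0 1 x) (sq_nonneg x)),
    hval, ENNReal.ofReal_one]

end AuxLemmas

/-- `E[μ{t ≥ b : |W(t)| ≥ t}] = E[(Z² - b)·1{Z² ≥ b}]` for standard normal `Z`;
in particular the value is `1` for `b = 0`. -/
theorem expected_occupation_above_line
    {Ω : Type*} [MeasurableSpace Ω]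
    (P : Measure Ω) [IsProbabilityMeasure P]
    (W : ℝ → Ω → ℝ) (hW : IsStdBM P W)
    (b : ℝ) (hb : 0 ≤ b) :
    (∫ ω, (MeasureTheory.volume {t : ℝ | b ≤ t ∧ t ≤ |W t ω|}).toReal ∂P =
      ∫ x, Set.indicator {x : ℝ | b ≤ x ^ 2} (fun x => x ^ 2 - b) x
        ∂(gaussianReal 0 1)) ∧
    (b = 0 → ∫ ω, (MeasureTheory.volume {t : ℝ | b ≤ t ∧ t ≤ |W t ω|}).toReal ∂P = 1) := by
  classical
  obtain ⟨N, hNsub, hNmeas, hNnull⟩ := exists_measurable_superset_of_null (ae_iff.mp hW.cont)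
  set W' : ℝ → Ω → ℝ := fun t ω => if ω ∈ N then 0 else W t ω with hW'def
  have hW'cont : ∀ ω, Continuous fun t => W' t ω := by
    intro ω
    by_cases h : ω ∈ N
    · simp only [hW'def, h, if_true]; exact continuous_const
    · have h2 : ω ∉ {ω | ¬ Continuous fun t : ℝ => W t ω} := fun hc => h (hNsub hc)
      simp only [Set.mem_setOf_eq, not_not] at h2
      simpa only [hW'def, h, if_false] using h2
  have hW'meas : ∀ t, Measurable (W' t) :=
    fun t => Measurable.ite hNmeas measurable_const (hW.meas t)
  have hU : Measurable (Function.uncurry W') :=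
    measurable_uncurry_of_continuous_of_measurable hW'cont hW'meas
  have hA : MeasurableSet {p : ℝ × Ω | b ≤ p.1 ∧ p.1 ≤ |W' p.1 p.2|} :=
    (measurableSet_le measurable_const measurable_fst).inter
      (measurableSet_le measurable_fst hU.abs)
  have hNae : ∀ᵐ ω ∂P, ω ∉ N := measure_eq_zero_iff_ae_notMem.mp hNnull
  have hSx : ∀ t : ℝ, MeasurableSet {x : ℝ | t ≤ |x|} :=
    fun t => measurableSet_le measurable_const continuous_abs.measurable
  have hmap : ∀ t : ℝ, 0 ≤ t → P.map (W t) = gaussianReal 0 t.toNNReal := by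
    intro t ht
    have h0 := hW.gauss 0 t le_rfl ht
    rw [sub_zero] at h0
    rw [← h0]
    apply Measure.map_congr
    filter_upwards [hW.init] with ω hω
    simp [hω]
  have hG : ∀ t : ℝ, 0 < t →
      gaussianReal 0 t.toNNReal {x | t ≤ |x|} = gaussianReal 0 1 {x | t ≤ x ^ 2} := by
    intro t ht
    have hmul := gaussianReal_map_const_mul (μ := 0) (v := 1) (Real.sqrt t)
    have hvar : gaussianReal 0 t.toNNReal = (gaussianReal 0 1).map (fun x => Real.sqrt t * x) := by
      rw [hmul, mul_zero]
      congr 1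
      apply NNReal.coe_injective
      simp [NNReal.coe_mul, Real.coe_toNNReal', max_eq_left ht.le, Real.sq_sqrt ht.le]
    rw [hvar, Measure.map_apply (measurable_const_mul _) (hSx t)]
    congr 1
    ext x
    simp only [Set.mem_preimage, Set.mem_setOf_eq]
    rw [abs_mul, abs_of_nonneg (Real.sqrt_nonneg t)]
    constructor
    · intro h
      nlinarith [Real.sq_sqrt ht.le, Real.sqrt_pos.mpr ht, abs_nonneg x, sq_abs x,
        mul_self_nonneg (|x| - Real.sqrt t)]
    · intro h
      nlinarith [Real.sq_sqrt ht.le, Real.sqrt_pos.mpr ht, abs_nonneg x, sq_abs x,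
        mul_self_nonneg (|x| - Real.sqrt t), mul_self_nonneg (|x| + Real.sqrt t)]
  have hB' : MeasurableSet {p : ℝ × ℝ | b ≤ p.1 ∧ p.1 ≤ p.2 ^ 2} :=
    (measurableSet_le measurable_const measurable_fst).inter
      (measurableSet_le measurable_fst (measurable_snd.pow_const 2))
  -- the key lintegral identity
  have hK : (∫⁻ ω, volume {t : ℝ | b ≤ t ∧ t ≤ |W' t ω|} ∂P)
      = ∫⁻ x, ENNReal.ofReal (x ^ 2 - b) ∂(gaussianReal 0 1) := by
    have h1 : (∫⁻ ω, volume {t : ℝ | b ≤ t ∧ t ≤ |W' t ω|} ∂P)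
        = ∫⁻ t, P {ω | b ≤ t ∧ t ≤ |W' t ω|} ∂volume :=
      (aux_swap_lintegral volume P hA).symm
    have h2 : ∀ᵐ t : ℝ, P {ω | b ≤ t ∧ t ≤ |W' t ω|}
        = gaussianReal 0 1 {x | b ≤ t ∧ t ≤ x ^ 2} := by
      have hne : ∀ᵐ t : ℝ, t ≠ 0 := by
        rw [ae_iff]
        have : {t : ℝ | ¬ t ≠ 0} = {0} := by ext; simp
        rw [this]
        exact measure_singleton 0
      filter_upwards [hne] with t ht0
      by_cases hbt : b ≤ t
      · have htpos : 0 < t := lt_of_le_of_ne (le_trans hb hbt) (Ne.symm ht0)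
        have e1 : {ω | b ≤ t ∧ t ≤ |W' t ω|} = {ω | t ≤ |W' t ω|} := by
          ext; simp [hbt]
        have e2 : {x : ℝ | b ≤ t ∧ t ≤ x ^ 2} = {x | t ≤ x ^ 2} := by
          ext; simp [hbt]
        rw [e1, e2]
        have e3 : P {ω | t ≤ |W' t ω|} = P {ω | t ≤ |W t ω|} := by
          apply measure_congr
          filter_upwards [hNae] with ω h
          have : W' t ω = W t ω := if_neg h
          change (t ≤ |W' t ω|) = (t ≤ |W t ω|)
          rw [this]
        rw [e3]
        have e4 : {ω | t ≤ |W t ω|} = (W t) ⁻¹' {x | t ≤ |x|} := rfl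
        rw [e4, ← Measure.map_apply (hW.meas t) (hSx t), hmap t htpos.le, hG t htpos]
      · have e1 : {ω | b ≤ t ∧ t ≤ |W' t ω|} = (∅ : Set Ω) := by ext; simp [hbt]
        have e2 : {x : ℝ | b ≤ t ∧ t ≤ x ^ 2} = (∅ : Set ℝ) := by ext; simp [hbt]
        simp [e1, e2]
    calc (∫⁻ ω, volume {t : ℝ | b ≤ t ∧ t ≤ |W' t ω|} ∂P)
        = ∫⁻ t, P {ω | b ≤ t ∧ t ≤ |W' t ω|} ∂volume := h1
      _ = ∫⁻ t, gaussianReal 0 1 {x | b ≤ t ∧ t ≤ x ^ 2} ∂volume := lintegral_congr_ae h2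
      _ = ∫⁻ x, volume {t : ℝ | b ≤ t ∧ t ≤ x ^ 2} ∂(gaussianReal 0 1) :=
          aux_swap_lintegral volume (gaussianReal 0 1) hB'
      _ = ∫⁻ x, ENNReal.ofReal (x ^ 2 - b) ∂(gaussianReal 0 1) := by
          apply lintegral_congr
          intro x
          rw [show {t : ℝ | b ≤ t ∧ t ≤ x ^ 2} = Icc b (x ^ 2) from rfl, Real.volume_Icc]
  have hfin : (∫⁻ ω, volume {t : ℝ | b ≤ t ∧ t ≤ |W' t ω|} ∂P) ≠ ⊤ := by
    rw [hK]
    have hle : (∫⁻ x, ENNReal.ofReal (x ^ 2 - b) ∂(gaussianReal 0 1))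
        ≤ ∫⁻ x, ENNReal.ofReal (x ^ 2) ∂(gaussianReal 0 1) :=
      lintegral_mono fun x => ENNReal.ofReal_le_ofReal (sub_le_self _ hb)
    exact ne_top_of_le_ne_top (by rw [aux_J]; exact ENNReal.one_ne_top) hle
  have hLae : ∫ ω, (volume {t : ℝ | b ≤ t ∧ t ≤ |W t ω|}).toReal ∂P
      = ∫ ω, (volume {t : ℝ | b ≤ t ∧ t ≤ |W' t ω|}).toReal ∂P := by
    apply integral_congr_ae
    filter_upwards [hNae] with ω h
    have : {t : ℝ | b ≤ t ∧ t ≤ |W t ω|} = {t : ℝ | b ≤ t ∧ t ≤ |W' t ω|} := by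
      ext t
      simp only [Set.mem_setOf_eq, hW'def, if_neg h]
    rw [this]
  have hmeasvol : Measurable fun ω => volume {t : ℝ | b ≤ t ∧ t ≤ |W' t ω|} :=
    measurable_measure_prodMk_right hA
  have hL : ∫ ω, (volume {t : ℝ | b ≤ t ∧ t ≤ |W' t ω|}).toReal ∂P
      = (∫⁻ ω, volume {t : ℝ | b ≤ t ∧ t ≤ |W' t ω|} ∂P).toReal :=
    integral_toReal hmeasvol.aemeasurable (ae_lt_top hmeasvol hfin)
  have hR : ∫ x, Set.indicator {x : ℝ | b ≤ x ^ 2} (fun x => x ^ 2 - b) x ∂(gaussianReal 0 1)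
      = (∫⁻ x, ENNReal.ofReal (x ^ 2 - b) ∂(gaussianReal 0 1)).toReal := by
    have hfun : (fun x : ℝ => Set.indicator {x : ℝ | b ≤ x ^ 2} (fun x => x ^ 2 - b) x)
        = fun x => max (x ^ 2 - b) 0 := by
      funext x
      by_cases h : b ≤ x ^ 2
      · rw [Set.indicator_of_mem (show x ∈ {x : ℝ | b ≤ x ^ 2} from h)]
        exact (max_eq_left (by linarith)).symm
      · rw [Set.indicator_of_notMem (show x ∉ {x : ℝ | b ≤ x ^ 2} from h)]
        push_neg at h
        exact (max_eq_right (by linarith)).symm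
    have hmain := integral_eq_lintegral_of_nonneg_ae (μ := gaussianReal 0 1)
      (f := fun x => max (x ^ 2 - b) 0)
      (Eventually.of_forall fun x => le_max_right _ _)
      (((continuous_pow 2).sub continuous_const).max continuous_const).aestronglyMeasurable
    rw [hfun, hmain]
    congr 1
    apply lintegral_congr
    intro x
    rcases le_total (x ^ 2 - b) 0 with h | h
    · simp [max_eq_right h, ENNReal.ofReal_of_nonpos h]
    · simp [max_eq_left h]
  constructor
  · rw [hLae, hL, hK, hR]
  · intro hb0
    subst hb0
    rw [hLae, hL, hK]
    simp only [sub_zero]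
    rw [aux_J]
    simp
end
end

section
/- Let W(t) = (W_1(t), ..., W_p(t))' be a vector of p independent standard Brownian motions and let M be a symmetric positive semidefinite p×p real matrix. Then E[ μ{ t > 0 : W(t)' M W(t) ≥ t² } ] = Tr(M), where μ is Lebesgue measure on (0,∞). (In the paper's notation, with distance ‖x‖ = {x'Ax}^{1/2} and limiting covariance Σ₀, the total number Q of ε-misses satisfies EQ = Tr(AΣ₀), corresponding to M = Σ₀^{1/2} A Σ₀^{1/2}.) -/
open MeasureTheory ProbabilityTheory Filter Set Topology

noncomputable section

/-- A vector of `p` independent standard Brownian motions. -/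
def IsVecOfIndepStdBM {Ω : Type*} [MeasurableSpace Ω] (P : Measure Ω) {p : ℕ}
    (W : ℝ → Ω → Fin p → ℝ) : Prop :=
  (∀ j : Fin p, IsStdBM P (fun t ω => W t ω j)) ∧
    iIndepFun
      (fun j : Fin p => fun ω => fun t : ℝ => W t ω j) P

open scoped ENNReal NNReal


lemma rpow_eq_sq (x : ℝ) : x ^ (2:ℝ) = x ^ 2 := by
  rw [show (2:ℝ) = ((2:ℕ):ℝ) by norm_num, Real.rpow_natCast]

lemma integrable_sq_exp_neg_half_sq :
    Integrable (fun x : ℝ => x ^ 2 * Real.exp (-(1/2) * x ^ 2)) := by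
  have h := integrable_rpow_mul_exp_neg_mul_sq (b := 1/2) (by norm_num) (s := 2) (by norm_num)
  simpa [rpow_eq_sq] using h

lemma integral_sq_exp_neg_half_sq :
    ∫ x : ℝ, x ^ 2 * Real.exp (-(1/2) * x ^ 2) = Real.sqrt (2 * Real.pi) := by
  set g : ℝ → ℝ := fun x => x ^ 2 * Real.exp (-(1/2) * x ^ 2) with hg
  have hint := integrable_sq_exp_neg_half_sq
  have hIic : ∫ x in Iic (0:ℝ), g x = ∫ x in Ioi (0:ℝ), g x := by
    rw [show (0:ℝ) = -(0:ℝ) by norm_num, ← integral_comp_neg_Ioi]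
    norm_num [hg]
  have hIoi : ∫ x in Ioi (0:ℝ), g x = Real.sqrt (2 * Real.pi) / 2 := by
    have key := integral_rpow_mul_exp_neg_mul_rpow (p := 2) (q := 2) (b := 1/2)
      (by norm_num) (by norm_num) (by norm_num)
    have hcongr : ∫ x in Ioi (0:ℝ), g x
        = ∫ x in Ioi (0:ℝ), x ^ (2:ℝ) * Real.exp (-(1/2) * x ^ (2:ℝ)) := by
      refine setIntegral_congr_fun measurableSet_Ioi (fun x hx => ?_)
      simp [hg, rpow_eq_sq]
    rw [hcongr, key]
    have hG : Real.Gamma ((2 + 1) / 2) = Real.sqrt Real.pi / 2 := by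
      rw [show ((2:ℝ) + 1)/2 = 1/2 + 1 by norm_num,
        Real.Gamma_add_one (by norm_num), Real.Gamma_one_half_eq]
      ring
    rw [hG]
    have h2 : ((1:ℝ)/2) ^ (-((2:ℝ) + 1) / 2) = 2 * Real.sqrt 2 := by
      rw [show ((1:ℝ)/2) = 2⁻¹ by norm_num, ← Real.rpow_neg_one (2:ℝ),
        ← Real.rpow_mul (by norm_num)]
      rw [show (-1 : ℝ) * (-(2 + 1) / 2) = 1 + 1/2 by norm_num,
        Real.rpow_add (by norm_num), Real.rpow_one, ← Real.sqrt_eq_rpow]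
    rw [h2, Real.sqrt_mul (by norm_num)]
    ring
  rw [← intervalIntegral.integral_Iic_add_Ioi (hint.integrableOn) (hint.integrableOn), hIic, hIoi]
  ring

lemma gaussianReal_std_eq :
    gaussianReal 0 1
      = MeasureTheory.volume.withDensity
          (fun x => ((gaussianPDFReal 0 1 x).toNNReal : ℝ≥0∞)) := by
  rw [gaussianReal_of_var_ne_zero 0 one_ne_zero]
  rfl

lemma integral_gaussianReal_std (g : ℝ → ℝ) :
    ∫ x, g x ∂(gaussianReal 0 1) = ∫ x, gaussianPDFReal 0 1 x * g x := by
  rw [gaussianReal_std_eq,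
    integral_withDensity_eq_integral_smul
      ((measurable_gaussianPDFReal 0 1).real_toNNReal) g]
  congr 1
  funext x
  rw [NNReal.smul_def, Real.coe_toNNReal _ (gaussianPDFReal_nonneg 0 1 x)]
  rfl

lemma integrable_gaussianReal_std_iff (g : ℝ → ℝ) :
    Integrable g (gaussianReal 0 1)
      ↔ Integrable (fun x => gaussianPDFReal 0 1 x * g x) MeasureTheory.volume := by
  rw [gaussianReal_std_eq,
    integrable_withDensity_iff_integrable_smul
      ((measurable_gaussianPDFReal 0 1).real_toNNReal)]
  constructor <;> intro h <;> refine h.congr (Eventually.of_forall fun x => ?_) <;>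
    simp only [NNReal.smul_def, Real.coe_toNNReal _ (gaussianPDFReal_nonneg 0 1 x),
      smul_eq_mul]

lemma gaussianPDFReal_std_eq (x : ℝ) :
    gaussianPDFReal 0 1 x
      = (Real.sqrt (2 * Real.pi))⁻¹ * Real.exp (-(1/2) * x ^ 2) := by
  simp only [gaussianPDFReal, NNReal.coe_one, mul_one, sub_zero]
  congr 1
  ring

lemma integrable_sq_gaussian : Integrable (fun x : ℝ => x ^ 2) (gaussianReal 0 1) := by
  rw [integrable_gaussianReal_std_iff]
  have : (fun x : ℝ => gaussianPDFReal 0 1 x * x ^ 2)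
      = fun x => (Real.sqrt (2 * Real.pi))⁻¹ * (x ^ 2 * Real.exp (-(1/2) * x ^ 2)) := by
    funext x; rw [gaussianPDFReal_std_eq]; ring
  rw [this]
  exact integrable_sq_exp_neg_half_sq.const_mul _

lemma integral_sq_gaussian : ∫ x, x ^ 2 ∂(gaussianReal 0 1) = 1 := by
  rw [integral_gaussianReal_std]
  have : (fun x : ℝ => gaussianPDFReal 0 1 x * x ^ 2)
      = fun x => (Real.sqrt (2 * Real.pi))⁻¹ * (x ^ 2 * Real.exp (-(1/2) * x ^ 2)) := by
    funext x; rw [gaussianPDFReal_std_eq]; ring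
  rw [this, integral_const_mul, integral_sq_exp_neg_half_sq]
  rw [inv_mul_cancel₀]
  positivity

lemma integral_id_gaussian : ∫ x, x ∂(gaussianReal 0 1) = 0 := by
  have hmap : (gaussianReal 0 1).map (fun x => (-1 : ℝ) * x) = gaussianReal 0 1 := by
    rw [gaussianReal_map_const_mul]
    have h1 : (-1 : ℝ) * 0 = 0 := by norm_num
    have h2 : (⟨(-1:ℝ)^2, sq_nonneg _⟩ : ℝ≥0) * 1 = 1 := by ext; norm_num
    rw [h1]; exact congrArg _ h2
  have h := integral_map (μ := gaussianReal 0 1)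
    (φ := fun x : ℝ => (-1 : ℝ) * x) (f := fun x : ℝ => x)
    (measurable_const_mul _).aemeasurable
    (by rw [hmap]; exact aestronglyMeasurable_id)
  rw [hmap] at h
  simp only [neg_one_mul] at h
  rw [integral_neg] at h
  linarith

lemma memL2_id_gaussian : MemLp (fun x : ℝ => x) 2 (gaussianReal 0 1) :=
  (memLp_two_iff_integrable_sq aestronglyMeasurable_id).mpr integrable_sq_gaussian

lemma map_pi_of_iIndepFun {Ω : Type*} [MeasurableSpace Ω] (P : Measure Ω)
    [IsProbabilityMeasure P] {p : ℕ} (X : Fin p → Ω → ℝ)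
    (hm : ∀ i, Measurable (X i))
    (hi : iIndepFun X P) :
    P.map (fun ω i => X i ω) = Measure.pi (fun i => P.map (X i)) := by
  haveI : ∀ i, IsProbabilityMeasure (P.map (X i)) :=
    fun i => Measure.isProbabilityMeasure_map (hm i).aemeasurable
  refine (Measure.pi_eq fun s hs => ?_).symm
  rw [Measure.map_apply (measurable_pi_lambda _ hm) (MeasurableSet.univ_pi hs)]
  have hpre : (fun ω i => X i ω) ⁻¹' (Set.pi univ s) = ⋂ i, X i ⁻¹' s i := by
    ext ω; simp [Set.mem_univ_pi]
  rw [hpre, show (⋂ i, X i ⁻¹' s i) = ⋂ i ∈ Finset.univ, X i ⁻¹' s i by simp]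
  rw [hi.measure_inter_preimage_eq_mul Finset.univ (fun i _ => hs i)]
  refine Finset.prod_congr rfl fun i _ => ?_
  rw [Measure.map_apply (hm i) (hs i)]

/-- `E[μ{t > 0 : W(t)'M W(t) ≥ t²}] = Tr(M)` for a symmetric positive semidefinite `M`. -/
theorem expected_occupation_quadratic_form
    {Ω : Type*} [MeasurableSpace Ω]
    (P : Measure Ω) [IsProbabilityMeasure P]
    (p : ℕ) (hp : 0 < p)
    (W : ℝ → Ω → Fin p → ℝ) (hW : IsVecOfIndepStdBM P W)
    (M : Matrix (Fin p) (Fin p) ℝ) (hM : M.PosSemidef) :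
    ∫ ω, (MeasureTheory.volume
        {t : ℝ | 0 < t ∧ t ^ 2 ≤ dotProduct (W t ω) (M.mulVec (W t ω))}).toReal ∂P
      = M.trace := by
  classical
  obtain ⟨hBM, hIndPaths⟩ := hW
  set Q : (Fin p → ℝ) → ℝ := fun x => dotProduct x (M.mulVec x) with hQdef
  have hQcont : Continuous Q := by
    simp only [hQdef, dotProduct, Matrix.mulVec]
    exact continuous_finset_sum _ fun i _ => (continuous_apply i).mul
      (continuous_finset_sum _ fun j _ => continuous_const.mul (continuous_apply j))
  have hQmeas : Measurable Q := hQcont.measurable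
  have hQnonneg : ∀ x, 0 ≤ Q x := fun x => by simpa using hM.dotProduct_mulVec_nonneg x
  have hmW : ∀ t, Measurable (W t) :=
    fun t => measurable_pi_lambda _ fun i => (hBM i).meas t
  -- modification with everywhere-continuous paths
  have hcontae : ∀ᵐ ω ∂P, ∀ i, Continuous fun t => W t ω i :=
    ae_all_iff.mpr fun i => (hBM i).cont
  obtain ⟨u, hu_sup, hu_meas, hu_null⟩ :=
    exists_measurable_superset_of_null (ae_iff.mp hcontae)
  set W' : ℝ → Ω → Fin p → ℝ := fun t => u.piecewise (fun _ => 0) (W t) with hW'def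
  have hW'eq : ∀ ω, ω ∉ u → ∀ t, W' t ω = W t ω :=
    fun ω hω t => Set.piecewise_eq_of_notMem _ _ _ hω
  have hW'meas : ∀ t, Measurable (W' t) :=
    fun t => Measurable.piecewise hu_meas measurable_const (hmW t)
  have hW'cont : ∀ ω, Continuous fun t => W' t ω := by
    intro ω
    by_cases hω : ω ∈ u
    · have : (fun t => W' t ω) = fun _ => (0 : Fin p → ℝ) :=
        funext fun t => Set.piecewise_eq_of_mem _ _ _ hω
      rw [this]; exact continuous_const
    · have h2 : ∀ i, Continuous fun t => W t ω i := by
        by_contra hc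
        exact hω (hu_sup hc)
      have : (fun t => W' t ω) = fun t => W t ω := funext (hW'eq ω hω)
      rw [this]
      exact continuous_pi h2
  have huncurry : Measurable (Function.uncurry W') :=
    measurable_uncurry_of_continuous_of_measurable hW'cont hW'meas
  have hmap2 : Measurable (fun q : Ω × ℝ => W' q.2 q.1) := huncurry.comp measurable_swap
  set E' : Set (Ω × ℝ) := {q : Ω × ℝ | 0 < q.2 ∧ q.2 ^ 2 ≤ Q (W' q.2 q.1)} with hE'def
  have hE'meas : MeasurableSet E' :=
    (measurableSet_lt measurable_const measurable_snd).inter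
      (measurableSet_le (measurable_snd.pow_const 2) (hQmeas.comp hmap2))
  set F : Ω → ℝ≥0∞ :=
    fun ω => MeasureTheory.volume {t : ℝ | 0 < t ∧ t ^ 2 ≤ Q (W t ω)} with hFdef
  set F' : Ω → ℝ≥0∞ :=
    fun ω => MeasureTheory.volume {t : ℝ | 0 < t ∧ t ^ 2 ≤ Q (W' t ω)} with hF'def
  have hF'meas : Measurable F' := by
    have h := measurable_measure_prodMk_left (ν := MeasureTheory.volume) hE'meas
    exact h
  have hae_nmem : ∀ᵐ ω ∂P, ω ∉ u := measure_eq_zero_iff_ae_notMem.mp hu_null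
  have hFF' : F =ᵐ[P] F' := by
    filter_upwards [hae_nmem] with ω hω
    simp only [hFdef, hF'def]
    congr 1
    ext t
    simp only [Set.mem_setOf_eq, hW'eq ω hω t]
  -- coordinate laws
  have hlaw : ∀ t : ℝ, 0 ≤ t → ∀ i,
      P.map (fun ω => W t ω i) = gaussianReal 0 (Real.toNNReal t) := by
    intro t ht i
    have h := (hBM i).gauss 0 t le_rfl ht
    rw [sub_zero] at h
    have hae : (fun ω => W t ω i - W 0 ω i) =ᵐ[P] fun ω => W t ω i := by
      filter_upwards [(hBM i).init] with ω h0
      simp only [h0, sub_zero]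
    rw [← Measure.map_congr hae, h]
  have hindt : ∀ t : ℝ, iIndepFun
      (fun i ω => W t ω i) P := by
    intro t
    exact hIndPaths.comp (fun i (f : ℝ → ℝ) => f t) (fun i => measurable_pi_apply t)
  have hjoint : ∀ t : ℝ, 0 ≤ t →
      P.map (W t) = Measure.pi fun _ : Fin p => gaussianReal 0 (Real.toNNReal t) := by
    intro t ht
    have h := map_pi_of_iIndepFun P (fun i ω => W t ω i)
      (fun i => (hBM i).meas t) (hindt t)
    have h2 : (fun ω (i : Fin p) => W t ω i) = W t := rfl
    rw [h2] at h
    rw [h]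
    exact congrArg Measure.pi (funext fun i => hlaw t ht i)
  have hlaw1 : ∀ i, P.map (fun ω => W 1 ω i) = gaussianReal 0 1 := by
    intro i
    rw [hlaw 1 zero_le_one i, Real.toNNReal_one]
  have hscaled : ∀ t : ℝ, 0 < t →
      P.map (fun ω (i : Fin p) => Real.sqrt t * W 1 ω i)
        = Measure.pi fun _ : Fin p => gaussianReal 0 (Real.toNNReal t) := by
    intro t ht
    have h := map_pi_of_iIndepFun P (fun i ω => Real.sqrt t * W 1 ω i)
      (fun i => ((hBM i).meas 1).const_mul _)
      ((hindt 1).comp (fun i x => Real.sqrt t * x) (fun i => measurable_const_mul _))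
    rw [h]
    refine congrArg Measure.pi (funext fun i => ?_)
    show Measure.map (fun ω => Real.sqrt t * W 1 ω i) P = gaussianReal 0 (Real.toNNReal t)
    have hcomp : (fun ω => Real.sqrt t * W 1 ω i)
        = (fun x : ℝ => Real.sqrt t * x) ∘ (fun ω => W 1 ω i) := rfl
    rw [hcomp, ← Measure.map_map (measurable_const_mul _) ((hBM i).meas 1), hlaw1 i,
      gaussianReal_map_const_mul]
    have h1 : Real.sqrt t * 0 = 0 := by norm_num
    have h2 : (⟨Real.sqrt t ^ 2, sq_nonneg _⟩ : ℝ≥0) * 1 = Real.toNNReal t := by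
      ext
      simp [Real.sq_sqrt ht.le, Real.coe_toNNReal t ht.le]
    rw [h1]; exact congrArg _ h2
  have hscale_set : ∀ t : ℝ, 0 < t → ∀ ω,
      (t ^ 2 ≤ Q (fun i => Real.sqrt t * W 1 ω i) ↔ t ≤ Q (W 1 ω)) := by
    intro t ht ω
    have hQs : Q (fun i => Real.sqrt t * W 1 ω i) = t * Q (W 1 ω) := by
      have hsm : (fun i => Real.sqrt t * W 1 ω i) = Real.sqrt t • (W 1 ω) := rfl
      rw [hsm]
      simp only [hQdef, Matrix.mulVec_smul, dotProduct_smul, smul_dotProduct,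
        smul_eq_mul]
      rw [← mul_assoc, Real.mul_self_sqrt ht.le]
    rw [hQs, pow_two]
    exact mul_le_mul_iff_right₀ ht
  -- moments
  have hL2 : ∀ i, MemLp (fun ω => W 1 ω i) 2 P := by
    intro i
    have h := memL2_id_gaussian
    rw [← hlaw1 i] at h
    exact (memLp_map_measure_iff aestronglyMeasurable_id
      ((hBM i).meas 1).aemeasurable).mp h
  have hmean : ∀ i, ∫ ω, W 1 ω i ∂P = 0 := by
    intro i
    have h := integral_map (μ := P) (φ := fun ω => W 1 ω i) (f := fun x : ℝ => x)
      ((hBM i).meas 1).aemeasurable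
      (by rw [hlaw1 i]; exact aestronglyMeasurable_id)
    rw [hlaw1 i, integral_id_gaussian] at h
    exact h.symm
  have hsq : ∀ i, ∫ ω, (W 1 ω i) ^ 2 ∂P = 1 := by
    intro i
    have h := integral_map (μ := P) (φ := fun ω => W 1 ω i) (f := fun x : ℝ => x ^ 2)
      ((hBM i).meas 1).aemeasurable
      (by rw [hlaw1 i]; exact (measurable_id.pow_const 2).aestronglyMeasurable)
    rw [hlaw1 i, integral_sq_gaussian] at h
    exact h.symm
  have hsqint : ∀ i, Integrable (fun ω => (W 1 ω i) ^ 2) P := fun i =>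
    (memLp_two_iff_integrable_sq ((hBM i).meas 1).aestronglyMeasurable).mp (hL2 i)
  have hterm_int : ∀ i j : Fin p, Integrable (fun ω => W 1 ω i * W 1 ω j) P := by
    intro i j
    by_cases hij : i = j
    · subst hij
      exact (hsqint i).congr (Eventually.of_forall fun ω => by simp [pow_two])
    · exact ((hindt 1).indepFun hij).integrable_mul
        ((hL2 i).integrable one_le_two) ((hL2 j).integrable one_le_two)
  have hEmul : ∀ i j : Fin p, ∫ ω, W 1 ω i * W 1 ω j ∂P = if i = j then 1 else 0 := by
    intro i j
    by_cases hij : i = j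
    · subst hij
      have hc : ∫ ω, W 1 ω i * W 1 ω i ∂P = ∫ ω, (W 1 ω i) ^ 2 ∂P :=
        integral_congr_ae (Eventually.of_forall fun ω => by simp [pow_two])
      rw [if_pos rfl, hc, hsq i]
    · rw [if_neg hij]
      have h := ((hindt 1).indepFun hij).integral_mul_eq_mul_integral
        ((hBM i).meas 1).aestronglyMeasurable ((hBM j).meas 1).aestronglyMeasurable
      have h2 : (∫ ω, W 1 ω i * W 1 ω j ∂P)
          = (∫ ω, W 1 ω i ∂P) * ∫ ω, W 1 ω j ∂P := h
      rw [h2, hmean i, hmean j, mul_zero]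
  have hQsum : ∀ x : Fin p → ℝ, Q x = ∑ i, ∑ j, M i j * (x i * x j) := by
    intro x
    simp only [hQdef, dotProduct, Matrix.mulVec, Finset.mul_sum]
    exact Finset.sum_congr rfl fun i _ => Finset.sum_congr rfl fun j _ => by ring
  have hQrepr : (fun ω => Q (W 1 ω))
      = fun ω => ∑ i, ∑ j, M i j * (W 1 ω i * W 1 ω j) :=
    funext fun ω => hQsum (W 1 ω)
  have hQint : Integrable (fun ω => Q (W 1 ω)) P := by
    rw [hQrepr]
    exact integrable_finset_sum _ fun i _ =>
      integrable_finset_sum _ fun j _ => (hterm_int i j).const_mul _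
  have hEQ : ∫ ω, Q (W 1 ω) ∂P = M.trace := by
    rw [hQrepr, integral_finset_sum _ fun i _ =>
      integrable_finset_sum _ fun j _ => (hterm_int i j).const_mul (M i j)]
    have hinner : ∀ i : Fin p, ∫ ω, ∑ j, M i j * (W 1 ω i * W 1 ω j) ∂P = M i i := by
      intro i
      rw [integral_finset_sum _ fun j _ => (hterm_int i j).const_mul (M i j)]
      have hterm : ∀ j : Fin p,
          ∫ ω, M i j * (W 1 ω i * W 1 ω j) ∂P = if i = j then M i i else 0 := by
        intro j
        rw [integral_const_mul, hEmul i j]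
        by_cases h : i = j <;> simp [h]
      rw [Finset.sum_congr rfl fun j _ => hterm j]
      simp
    rw [Finset.sum_congr rfl fun i _ => hinner i]
    simp [Matrix.trace, Matrix.diag]
  have hQnonnegae : 0 ≤ᵐ[P] fun ω => Q (W 1 ω) :=
    Eventually.of_forall fun ω => hQnonneg _
  have hfmeasQ : Measurable (fun ω => Q (W 1 ω)) := hQmeas.comp (hmW 1)
  have hlayer : ∫⁻ ω, ENNReal.ofReal (Q (W 1 ω)) ∂P
      = ∫⁻ t in Ioi (0:ℝ), P {ω | t ≤ Q (W 1 ω)} :=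
    lintegral_eq_lintegral_meas_le P hQnonnegae hfmeasQ.aemeasurable
  -- per-t identity
  have hg : (fun t : ℝ => P ((fun ω => (ω, t)) ⁻¹' E'))
      = (Ioi (0:ℝ)).indicator (fun t => P {ω | t ≤ Q (W 1 ω)}) := by
    funext t
    have hpre : ((fun ω => (ω, t)) ⁻¹' E') = {ω | 0 < t ∧ t ^ 2 ≤ Q (W' t ω)} := rfl
    by_cases ht : 0 < t
    · rw [Set.indicator_of_mem (mem_Ioi.mpr ht), hpre]
      have e1 : {ω | 0 < t ∧ t ^ 2 ≤ Q (W' t ω)} = {ω | t ^ 2 ≤ Q (W' t ω)} := by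
        ext ω; simp [ht]
      have e2 : P {ω | t ^ 2 ≤ Q (W' t ω)} = P {ω | t ^ 2 ≤ Q (W t ω)} := by
        refine measure_congr (Filter.eventuallyEq_set.mpr ?_)
        filter_upwards [hae_nmem] with ω hω
        rw [hW'eq ω hω t]
      have hset : MeasurableSet {x : Fin p → ℝ | t ^ 2 ≤ Q x} :=
        measurableSet_le measurable_const hQmeas
      have e3 : P {ω | t ^ 2 ≤ Q (W t ω)} = (P.map (W t)) {x | t ^ 2 ≤ Q x} := by
        rw [Measure.map_apply (hmW t) hset]
        rfl
      have e4 : (P.map (fun ω (i : Fin p) => Real.sqrt t * W 1 ω i)) {x | t ^ 2 ≤ Q x}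
          = P {ω | t ^ 2 ≤ Q (fun i => Real.sqrt t * W 1 ω i)} := by
        rw [Measure.map_apply
          (measurable_pi_lambda _ fun i => ((hBM i).meas 1).const_mul _) hset]
        rfl
      have e5 : {ω | t ^ 2 ≤ Q (fun i => Real.sqrt t * W 1 ω i)}
          = {ω | t ≤ Q (W 1 ω)} :=
        Set.ext fun ω => hscale_set t ht ω
      rw [e1, e2, e3, hjoint t ht.le, ← hscaled t ht, e4, e5]
    · rw [Set.indicator_of_notMem (by simpa using ht), hpre]
      have : {ω : Ω | 0 < t ∧ t ^ 2 ≤ Q (W' t ω)} = ∅ := by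
        ext ω; simp [ht]
      rw [this, measure_empty]
  -- main computation
  have hkey : ∫⁻ ω, F ω ∂P = ENNReal.ofReal M.trace := by
    calc ∫⁻ ω, F ω ∂P = ∫⁻ ω, F' ω ∂P := lintegral_congr_ae hFF'
    _ = (P.prod MeasureTheory.volume) E' := (Measure.prod_apply hE'meas).symm
    _ = ∫⁻ t, P ((fun ω => (ω, t)) ⁻¹' E') ∂MeasureTheory.volume :=
        Measure.prod_apply_symm hE'meas
    _ = ∫⁻ t in Ioi (0:ℝ), P {ω | t ≤ Q (W 1 ω)} := by
        rw [hg]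
        exact lintegral_indicator measurableSet_Ioi _
    _ = ∫⁻ ω, ENNReal.ofReal (Q (W 1 ω)) ∂P := hlayer.symm
    _ = ENNReal.ofReal (∫ ω, Q (W 1 ω) ∂P) :=
        (ofReal_integral_eq_lintegral_ofReal hQint hQnonnegae).symm
    _ = ENNReal.ofReal M.trace := by rw [hEQ]
  have hne : ∫⁻ ω, F ω ∂P ≠ ∞ := by rw [hkey]; exact ENNReal.ofReal_ne_top
  have hFae : AEMeasurable F P := hF'meas.aemeasurable.congr hFF'.symm
  have htr : (0:ℝ) ≤ M.trace := by
    rw [← hEQ]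
    exact integral_nonneg fun ω => hQnonneg _
  have hfin := integral_toReal hFae (ae_lt_top' hFae hne)
  calc ∫ ω, (F ω).toReal ∂P = (∫⁻ ω, F ω ∂P).toReal := hfin
  _ = M.trace := by rw [hkey, ENNReal.toReal_ofReal htr]
end
end
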